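/- arXiv:0705.1067 — 7 statements merged into one kernel-verified Lean document; each statement's English description precedes it below -/
import Mathlib

section
/- Let J be a finite set of positive integers with 1 ∉ J. Then Σ_{I ⊆ J} (-1)^{|I|} / lcm(I) > 0, where lcm(∅) = 1. -/
/-!
Put `M = lcm (J \ {0})`. For `d = lcm I` with `I ⊆ J`, exactly `M / d` of the integers in
`(0, M]` are multiples of `d` (none if `d = 0`, matching `M / 0 = 0`), so expanding the
product `∏_{j ∈ J} (1 - [j ∣ n])` shows that `M` times the alternating sum counts the
`n ∈ (0, M]` divisible by no element of `J`. Since `1 ∉ J`, the integer `n = 1` is one of them.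
-/

open Finset

lemma ite_forall_not_dvd_eq_sum_powerset {R : Type*} [CommRing R] (J : Finset ℕ) (n : ℕ) :
    (if ∀ j ∈ J, ¬ j ∣ n then 1 else 0 : R) =
      ∑ I ∈ J.powerset, (-1) ^ #I * if I.lcm id ∣ n then 1 else 0 := by
  classical
  calc (if ∀ j ∈ J, ¬ j ∣ n then 1 else 0 : R)
      = ∏ j ∈ J, (1 - if j ∣ n then 1 else 0) := by
        rw [← prod_boole]
        exact prod_congr rfl fun j _ ↦ by split_ifs <;> simp
    _ = _ := by
        simp only [prod_sub, prod_const_one, mul_one, prod_boole, Finset.lcm_dvd_iff, id]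

lemma sum_Ioc_ite_dvd {K : Type*} [DivisionRing K] [CharZero K] {d M : ℕ}
    (h : d ≠ 0 → d ∣ M) : ∑ n ∈ Ioc 0 M, (if d ∣ n then 1 else 0 : K) = M / d := by
  rw [sum_boole, Nat.Ioc_filter_dvd_card_eq_div]
  rcases eq_or_ne d 0 with rfl | hd
  · simp
  · exact Nat.cast_div_charZero (h hd)

theorem card_filter_forall_not_dvd_eq {K : Type*} [Field K] [CharZero K] (J : Finset ℕ) {M : ℕ}
    (hM : ∀ j ∈ J, j ≠ 0 → j ∣ M) :
    (#{n ∈ Ioc 0 M | ∀ j ∈ J, ¬ j ∣ n} : K) =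
      M * ∑ I ∈ J.powerset, (-1 : K) ^ #I / (I.lcm id : ℕ) := by
  have hdvd : ∀ I ∈ J.powerset, I.lcm id ≠ 0 → I.lcm id ∣ M := fun I hI hI0 ↦
    lcm_dvd fun j hj ↦ hM j (mem_powerset.mp hI hj)
      fun hj0 ↦ hI0 (lcm_eq_zero_iff.mpr ⟨j, hj, hj0⟩)
  rw [natCast_card_filter]
  simp only [ite_forall_not_dvd_eq_sum_powerset (R := K)]
  rw [sum_comm, mul_sum]
  refine sum_congr rfl fun I hI ↦ ?_
  rw [← mul_sum, sum_Ioc_ite_dvd (hdvd I hI)]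
  ring

theorem alternating_lcm_sum_pos_general (J : Finset ℕ) (h1 : 1 ∉ J) :
    0 < ∑ I ∈ J.powerset, ((-1 : ℚ) ^ I.card / ((I.lcm id : ℕ) : ℚ)) := by
  set M := (J.erase 0).lcm id
  have hM0 : 0 < M := Nat.pos_of_ne_zero fun h ↦ by simpa using lcm_eq_zero_iff.mp h
  have hM : ∀ j ∈ J, j ≠ 0 → j ∣ M := fun j hj hj0 ↦ dvd_lcm (mem_erase.mpr ⟨hj0, hj⟩)
  have hone : 1 ∈ {n ∈ Ioc 0 M | ∀ j ∈ J, ¬ j ∣ n} :=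
    mem_filter.mpr ⟨mem_Ioc.mpr ⟨one_pos, hM0⟩,
      fun j hj hdvd ↦ h1 (Nat.dvd_one.mp hdvd ▸ hj)⟩
  have hcount : (0 : ℚ) < #{n ∈ Ioc 0 M | ∀ j ∈ J, ¬ j ∣ n} := by
    exact_mod_cast card_pos.mpr ⟨1, hone⟩
  rw [card_filter_forall_not_dvd_eq J hM] at hcount
  exact pos_of_mul_pos_right hcount (Nat.cast_nonneg M)

theorem alternating_lcm_sum_pos (J : Finset ℕ) (hpos : ∀ j ∈ J, 0 < j) (h1 : 1 ∉ J) :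
    0 < ∑ I ∈ J.powerset, ((-1 : ℚ) ^ I.card / ((I.lcm id : ℕ) : ℚ)) :=
  alternating_lcm_sum_pos_general J h1
end

section
/- Let O(n) = (1/n) Σ_{d|n} μ(n/d) F(d) where F(d) = 3^{ord_3(2^d - 1)}. Then for all N ≥ 2, the orbit counting function π(N) = Σ_{n ≤ N} O(n) satisfies π(N) = 1 + ⌊log_3(N/2)⌋ + 1 whenever N ≥ 2, i.e., π(N) = log N / log 3 + O(1). -/
/-!
Lifting the exponent gives `F(n) = 1` for odd `n` and `F(n) = 3 ^ (1 + v₃(n/2))` for even `n`.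
Since `1 + 2 (1 + 3 + ⋯ + 3^v) = 3^(v+1)`, this is exactly `∑_{d ∣ n} d · 1_S(d)` for
`S = {1} ∪ {2·3^j}`, so by Möbius inversion `O = 1_S`: there is one closed orbit of each length
in `S` and none of any other length. Hence `π(N) = 2 + ⌊log₃ (N/2)⌋`, which is `log₃ N + O(1)`.
-/

def F3' (d : ℕ) : ℕ := 3 ^ padicValNat 3 (2 ^ d - 1)

noncomputable def O3' (n : ℕ) : ℚ :=
  (1 / (n : ℚ)) * ∑ d ∈ n.divisors, (ArithmeticFunction.moebius (n / d) : ℚ) * (F3' d : ℚ)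

noncomputable def pi3' (N : ℕ) : ℚ := ∑ n ∈ Finset.Icc 1 N, O3' n

open Finset

lemma F3'_of_odd {n : ℕ} (hn : Odd n) : F3' n = 1 := by
  obtain ⟨k, rfl⟩ := hn
  have h3 : 3 ∣ 4 ^ k - 1 := by simpa using Nat.sub_dvd_pow_sub_pow 4 1 k
  have hpos : 1 ≤ 4 ^ k := Nat.one_le_pow _ _ (by norm_num)
  have h2 : 2 ^ (2 * k + 1) = 2 * 4 ^ k := by rw [pow_succ, pow_mul]; ring
  have hndvd : ¬3 ∣ 2 * 4 ^ k - 1 := by omega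
  rw [F3', h2, padicValNat.eq_zero_of_not_dvd hndvd, pow_zero]

lemma F3'_two_mul {k : ℕ} (hk : k ≠ 0) : F3' (2 * k) = 3 ^ (1 + padicValNat 3 k) := by
  have lte := padicValNat.pow_sub_pow (p := 3) (x := 4) (y := 1) (by decide)
    (by norm_num) (by norm_num) (by norm_num) hk
  rw [F3', pow_mul]
  congr 1
  simpa using lte

lemma padicValNat_three_two_mul_pow (j : ℕ) : padicValNat 3 (2 * 3 ^ j) = j := by
  rw [padicValNat.mul (by norm_num) (by positivity),
    padicValNat.eq_zero_of_not_dvd (by norm_num), padicValNat.prime_pow, zero_add]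

def IsOrbitLength (n : ℕ) : Prop := n = 1 ∨ ∃ j, n = 2 * 3 ^ j

lemma isOrbitLength_iff_padicValNat (n : ℕ) :
    IsOrbitLength n ↔ n = 1 ∨ n = 2 * 3 ^ padicValNat 3 n := by
  refine or_congr_right ⟨?_, fun h => ⟨_, h⟩⟩
  rintro ⟨j, rfl⟩
  rw [padicValNat_three_two_mul_pow]

instance : DecidablePred IsOrbitLength := fun n =>
  decidable_of_iff _ (isOrbitLength_iff_padicValNat n).symm

def orbitLengths (m : ℕ) : Finset ℕ := insert 1 ((range m).image fun j => 2 * 3 ^ j)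

lemma sum_orbitLengths_eq (f : ℕ → ℚ) (m : ℕ) :
    ∑ d ∈ orbitLengths m, f d = f 1 + ∑ j ∈ range m, f (2 * 3 ^ j) := by
  have hinj : Set.InjOn (fun j => 2 * 3 ^ j) (range m) := fun i _ j _ h =>
    Nat.pow_right_injective (a := 3) (by norm_num) (Nat.eq_of_mul_eq_mul_left two_pos h)
  have hone : 1 ∉ (range m).image fun j => 2 * 3 ^ j := by
    simp only [mem_image, not_exists, not_and]
    intro j _ h
    have := Nat.one_le_pow j 3 (by norm_num)
    omega
  rw [orbitLengths, sum_insert hone, sum_image hinj]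

lemma card_orbitLengths (m : ℕ) : #(orbitLengths m) = m + 1 := by
  have := sum_orbitLengths_eq (fun _ => 1) m
  simp only [sum_const, card_range, nsmul_eq_mul, mul_one] at this
  exact_mod_cast this.trans (add_comm _ _)

lemma sum_orbitLengths_self (m : ℕ) : ∑ d ∈ orbitLengths m, (d : ℚ) = 3 ^ m := by
  rw [sum_orbitLengths_eq]
  induction m with
  | zero => simp
  | succ m ih => rw [sum_range_succ, ← add_assoc, ih]; push_cast; ring

lemma filter_isOrbitLength_eq {s : Finset ℕ} {m : ℕ} (h1 : 1 ∈ s)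
    (hs : ∀ j, 2 * 3 ^ j ∈ s ↔ j < m) : s.filter IsOrbitLength = orbitLengths m := by
  ext d
  simp only [mem_filter, IsOrbitLength, orbitLengths, mem_insert, mem_image, mem_range]
  constructor
  · rintro ⟨hd, rfl | ⟨j, rfl⟩⟩
    · exact .inl rfl
    · exact .inr ⟨j, (hs j).1 hd, rfl⟩
  · rintro (rfl | ⟨j, hj, rfl⟩)
    · exact ⟨h1, .inl rfl⟩
    · exact ⟨(hs j).2 hj, .inr ⟨j, rfl⟩⟩

lemma divisors_filter_isOrbitLength {n : ℕ} (hn : n ≠ 0) :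
    n.divisors.filter IsOrbitLength =
      orbitLengths (if Even n then padicValNat 3 n + 1 else 0) := by
  refine filter_isOrbitLength_eq (Nat.one_mem_divisors.2 hn) fun j => ?_
  have h3 : 3 ^ j ∣ n ↔ j < padicValNat 3 n + 1 := by
    rw [padicValNat_dvd_iff_le hn, Nat.lt_succ_iff]
  have hcop : Nat.Coprime 2 (3 ^ j) := Nat.Coprime.pow_right j (by norm_num)
  have hdvd : 2 * 3 ^ j ∣ n ↔ 2 ∣ n ∧ 3 ^ j ∣ n :=
    ⟨fun h => ⟨dvd_of_mul_right_dvd h, dvd_of_mul_left_dvd h⟩,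
      fun h => hcop.mul_dvd_of_dvd_of_dvd h.1 h.2⟩
  rw [Nat.mem_divisors, and_iff_left hn, hdvd, ← even_iff_two_dvd, h3]
  split_ifs with he <;> simp [he]

lemma sum_divisors_filter_isOrbitLength {n : ℕ} (hn : n ≠ 0) :
    ∑ d ∈ n.divisors.filter IsOrbitLength, (d : ℚ) = F3' n := by
  rw [divisors_filter_isOrbitLength hn, sum_orbitLengths_self]
  split_ifs with he
  · obtain ⟨k, rfl⟩ := even_iff_two_dvd.1 he
    have hk : k ≠ 0 := by rintro rfl; simp at hn
    rw [F3'_two_mul hk, padicValNat.mul (by norm_num) hk,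
      padicValNat.eq_zero_of_not_dvd (by norm_num)]
    push_cast; ring
  · rw [F3'_of_odd (Nat.not_even_iff_odd.1 he)]; simp

lemma O3'_eq {n : ℕ} (hn : n ≠ 0) : O3' n = if IsOrbitLength n then 1 else 0 := by
  set g : ℕ → ℚ := fun d => if IsOrbitLength d then (d : ℚ) else 0
  have hsum : ∀ m > 0, ∑ d ∈ m.divisors, g d = F3' m := fun m hm => by
    rw [← sum_divisors_filter_isOrbitLength hm.ne', sum_filter]
  have hinv : ∑ d ∈ n.divisors, (ArithmeticFunction.moebius (n / d) : ℚ) * F3' d = g n := by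
    rw [← ArithmeticFunction.sum_eq_iff_sum_mul_moebius_eq.1 hsum n (Nat.pos_of_ne_zero hn),
      ← Nat.map_div_left_divisors, sum_map]
    rfl
  have hn' : (n : ℚ) ≠ 0 := Nat.cast_ne_zero.2 hn
  rw [O3', hinv]
  simp only [g]
  split_ifs <;> simp [hn']

lemma pi3'_eq_card (N : ℕ) : pi3' N = #((Icc 1 N).filter IsOrbitLength) := by
  rw [pi3', card_filter, Nat.cast_sum]
  refine sum_congr rfl fun n hn => ?_
  rw [O3'_eq (by simp at hn; omega)]
  push_cast; rfl

lemma pi3'_eq {N : ℕ} (hN : 2 ≤ N) : pi3' N = Nat.log 3 (N / 2) + 2 := by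
  have hN2 : N / 2 ≠ 0 := by omega
  rw [pi3'_eq_card, filter_isOrbitLength_eq (m := Nat.log 3 (N / 2) + 1), card_orbitLengths]
  · push_cast; ring
  · simp; omega
  · intro j
    rw [mem_Icc, Nat.lt_succ_iff, Nat.le_log_iff_pow_le (by norm_num) hN2,
      Nat.le_div_iff_mul_le two_pos]
    have := Nat.one_le_pow j 3 (by norm_num)
    omega

lemma logb_three_mem_Ico {N : ℕ} (hN : 2 ≤ N) :
    Real.logb 3 N ∈ Set.Ico (Nat.log 3 (N / 2) : ℝ) (Nat.log 3 (N / 2) + 2) := by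
  set L := Nat.log 3 (N / 2)
  have hlow : 3 ^ L ≤ N := (Nat.pow_log_le_self 3 (by omega)).trans (Nat.div_le_self _ _)
  have hup : N < 3 ^ (L + 2) := by
    have h : N / 2 < 3 ^ (L + 1) := Nat.lt_pow_succ_log_self (by norm_num) _
    have h' : 3 ^ (L + 2) = 3 * 3 ^ (L + 1) := by ring
    omega
  have hNpos : (0 : ℝ) < N := by positivity
  constructor
  · rw [Real.le_logb_iff_rpow_le (by norm_num) hNpos, Real.rpow_natCast]
    exact_mod_cast hlow
  · rw [Real.logb_lt_iff_lt_rpow (by norm_num) hNpos, ← Nat.cast_ofNat, ← Nat.cast_two,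
      ← Nat.cast_add, Real.rpow_natCast]
    exact_mod_cast hup

theorem orbit_growth_log3 :
    ∃ C : ℝ, ∀ N : ℕ, 2 ≤ N →
      |(pi3' N : ℝ) - Real.log N / Real.log 3| ≤ C := by
  refine ⟨2, fun N hN => ?_⟩
  obtain ⟨hlow, hup⟩ := logb_three_mem_Ico hN
  rw [← Real.logb, pi3'_eq hN, abs_le]
  push_cast
  constructor <;> linarith
end

section
/- Let F(n) = |2^n−1|_3^{-1} = 3^{ord_3(2^n−1)} and O(n) = (1/n)Σ_{d|n} μ(n/d)F(d). Then O(1) = 1, O(2·3^e) = 1 for every e ≥ 0, and O(n) = 0 for all other n. -/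
/-! By lifting the exponent, `ord₃(2ⁿ - 1)` is `0` for odd `n` and `1 + ord₃ n` for even `n`.
Hence `F(n) = ∑_{d ∣ n} w(d)` with `w(d) = d` for `d ∈ {1} ∪ {2·3ᵉ}` and `w(d) = 0` otherwise:
for even `n` these divisors are `1` and the `2·3ᵉ` with `e ≤ b = ord₃ n`, and
`1 + 2(1 + 3 + ⋯ + 3ᵇ) = 3ᵇ⁺¹`. Möbius inversion then gives `n · O(n) = w(n)`. -/

def F4 (d : ℕ) : ℕ := 3 ^ padicValNat 3 (2 ^ d - 1)

noncomputable def O4 (n : ℕ) : ℚ :=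
  (1 / (n : ℚ)) * ∑ d ∈ n.divisors, (ArithmeticFunction.moebius (n / d) : ℚ) * (F4 d : ℚ)

open Finset
open scoped Classical

lemma padicValNat_three_two_pow_sub_one_of_odd {n : ℕ} (hn : Odd n) :
    padicValNat 3 (2 ^ n - 1) = 0 := by
  obtain ⟨k, rfl⟩ := hn
  have h4 : 4 ^ k % 3 = 1 := by rw [Nat.pow_mod]; simp
  have hpow : 2 ^ (2 * k + 1) = 2 * 4 ^ k := by rw [pow_succ, pow_mul]; ring
  refine padicValNat.eq_zero_of_not_dvd ?_
  rw [hpow]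
  omega

lemma padicValNat_three_two_pow_sub_one_of_even {n : ℕ} (hn : Even n) (hn0 : n ≠ 0) :
    padicValNat 3 (2 ^ n - 1) = padicValNat 3 n + 1 := by
  obtain ⟨m, rfl⟩ := hn
  have hm : m ≠ 0 := by omega
  have hlte : padicValNat 3 (4 ^ m - 1 ^ m) = padicValNat 3 (4 - 1) + padicValNat 3 m :=
    padicValNat.pow_sub_pow (by decide) (by norm_num) (by norm_num) (by norm_num) hm
  have hpow : 2 ^ (m + m) = 4 ^ m := by rw [← two_mul, pow_mul]; norm_num
  rw [hpow, ← two_mul, padicValNat.mul two_ne_zero hm,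
    padicValNat.eq_zero_of_not_dvd (by decide : ¬ 3 ∣ 2)]
  simpa [padicValNat.self, add_comm] using hlte

lemma sum_divisors_filter_mul_pow {M : Type*} [AddCommMonoid M] (f : ℕ → M) {p q n : ℕ}
    [Fact p.Prime] (hqp : q.Coprime p) (hn : n ≠ 0) :
    ∑ d ∈ n.divisors with ∃ e, d = q * p ^ e, f d =
      if q ∣ n then ∑ e ∈ range (padicValNat p n + 1), f (q * p ^ e) else 0 := by
  have hp : p.Prime := Fact.out
  have hq : q ≠ 0 := by
    rintro rfl
    exact hp.one_lt.ne' (Nat.coprime_zero_left p |>.mp hqp)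
  have hdvd (e : ℕ) : q * p ^ e ∣ n ↔ q ∣ n ∧ e ≤ padicValNat p n := by
    rw [← padicValNat_dvd_iff_le hn]
    exact ⟨fun h => ⟨dvd_of_mul_right_dvd h, dvd_of_mul_left_dvd h⟩,
      fun ⟨h₁, h₂⟩ => (hqp.pow_right e).mul_dvd_of_dvd_of_dvd h₁ h₂⟩
  split_ifs with hqn
  · have hinj : Set.InjOn (fun e => q * p ^ e) (range (padicValNat p n + 1)) :=
      fun a _ b _ hab => Nat.pow_right_injective hp.two_le (Nat.eq_of_mul_eq_mul_left
        (Nat.pos_of_ne_zero hq) hab)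
    rw [← sum_image hinj]
    congr 1
    ext d
    simp only [mem_filter, Nat.mem_divisors, mem_image, mem_range, Nat.lt_succ_iff]
    constructor
    · rintro ⟨⟨hd, -⟩, e, rfl⟩
      exact ⟨e, ((hdvd e).mp hd).2, rfl⟩
    · rintro ⟨e, he, rfl⟩
      exact ⟨⟨(hdvd e).mpr ⟨hqn, he⟩, hn⟩, e, rfl⟩
  · refine sum_eq_zero fun d hd => absurd ?_ hqn
    obtain ⟨hd, e, rfl⟩ := mem_filter.mp hd
    exact dvd_of_mul_right_dvd (Nat.dvd_of_mem_divisors hd)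

/-- `n` times the number of closed orbits of length `n`. -/
noncomputable def orbitWeight (n : ℕ) : ℕ :=
  (if n = 1 then 1 else 0) + if ∃ e, n = 2 * 3 ^ e then n else 0

lemma sum_divisors_orbitWeight {n : ℕ} (hn : n ≠ 0) :
    ∑ d ∈ n.divisors, orbitWeight d = F4 n := by
  have h2 : Nat.Coprime 2 3 := by norm_num
  simp only [orbitWeight, sum_add_distrib, sum_ite_eq', Nat.one_mem_divisors.mpr hn, if_true,
    ← sum_filter]
  rw [sum_divisors_filter_mul_pow (fun d => d) h2 hn, F4]
  rcases Nat.even_or_odd n with heven | hodd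
  · rw [if_pos heven.two_dvd, padicValNat_three_two_pow_sub_one_of_even heven hn, ← mul_sum,
      add_comm, mul_comm]
    exact geom_sum_mul_add 2 _
  · rw [if_neg (Nat.not_even_iff_odd.mpr hodd ∘ even_iff_two_dvd.mpr),
      padicValNat_three_two_pow_sub_one_of_odd hodd, add_zero, pow_zero]

lemma sum_moebius_mul_F4 {n : ℕ} (hn : n ≠ 0) :
    ∑ d ∈ n.divisors, (ArithmeticFunction.moebius (n / d) : ℚ) * F4 d = orbitWeight n := by
  have hinv := (ArithmeticFunction.sum_eq_iff_sum_mul_moebius_eq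
    (f := fun n => (orbitWeight n : ℚ)) (g := fun n => (F4 n : ℚ))).mp
    (fun n hn => by exact_mod_cast sum_divisors_orbitWeight hn.ne') n (Nat.pos_of_ne_zero hn)
  rw [← hinv, ← Nat.sum_divisorsAntidiagonal'
    (f := fun a b => (ArithmeticFunction.moebius a : ℚ) * (F4 b : ℚ))]

lemma O4_eq {n : ℕ} (hn : n ≠ 0) : O4 n = if n = 1 ∨ ∃ e, n = 2 * 3 ^ e then 1 else 0 := by
  have hdisj : ¬ (n = 1 ∧ ∃ e, n = 2 * 3 ^ e) := by rintro ⟨rfl, e, he⟩; omega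
  rw [O4, sum_moebius_mul_F4 hn, orbitWeight]
  have : (n : ℚ) ≠ 0 := by exact_mod_cast hn
  split_ifs <;> simp_all

theorem orbit_counts_doubling_Z3 :
    O4 1 = 1 ∧ (∀ e : ℕ, O4 (2 * 3 ^ e) = 1) ∧
    (∀ n : ℕ, 1 ≤ n → n ≠ 1 → (¬ ∃ e : ℕ, n = 2 * 3 ^ e) → O4 n = 0) := by
  refine ⟨?_, fun e => ?_, fun n hn hn1 hne => ?_⟩
  · simp [O4_eq one_ne_zero]
  · rw [O4_eq (by positivity), if_pos (Or.inr ⟨e, rfl⟩)]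
  · rw [O4_eq (by omega), if_neg (not_or.mpr ⟨hn1, hne⟩)]
end

section
/- Let O(n) be defined by O(1)=1, O(3)=5, O(3·2^e)=4·2^e for e ≥ 1, and O(n)=0 otherwise. Then for all N ≥ 6, π(N) = Σ_{n≤N} O(n) = (8/3)·2^{−{log_2(N/3)}}·N − 2, where {x} denotes the fractional part of x. -/
open Classical in
noncomputable def O9 (n : ℕ) : ℕ :=
  if n = 1 then 1
  else if n = 3 then 5
  else if ∃ e : ℕ, 1 ≤ e ∧ n = 3 * 2 ^ e then 4 * 2 ^ padicValNat 2 n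
  else 0

noncomputable def pi9 (N : ℕ) : ℕ := ∑ n ∈ Finset.Icc 1 N, O9 n

/-! `O9` vanishes off `1` and the points `3 * 2 ^ e`, so when `3 * 2 ^ L ≤ N < 3 * 2 ^ (L + 1)`
the sum `pi9 N` is `1 + 5 + ∑_{e=1}^{L} 4 * 2 ^ e = 8 * 2 ^ L - 2`. Here `L = ⌊log₂ (N / 3)⌋`, and
`2 ^ (-{log₂ (N / 3)}) = 2 ^ L / (N / 3)` turns the right-hand side into the same number. -/

lemma O9_three_mul_two_pow_succ (e : ℕ) : O9 (3 * 2 ^ (e + 1)) = 8 * 2 ^ e := by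
  have hval : padicValNat 2 (3 * 2 ^ (e + 1)) = e + 1 := by
    rw [padicValNat.mul (by norm_num) (by positivity), padicValNat.prime_pow,
      padicValNat.eq_zero_of_not_dvd (by norm_num), zero_add]
  have hpow : 2 ≤ 2 ^ (e + 1) := Nat.le_self_pow (Nat.succ_ne_zero e) 2
  rw [O9, if_neg (by omega), if_neg (by omega), if_pos ⟨e + 1, by omega, rfl⟩, hval, pow_succ]
  ring

lemma O9_eq_zero_of_ne {n : ℕ} (h1 : n ≠ 1) (h : ∀ e, n ≠ 3 * 2 ^ e) : O9 n = 0 := by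
  rw [O9, if_neg h1, if_neg (by simpa using h 0), if_neg]
  rintro ⟨e, -, rfl⟩
  exact h e rfl

lemma sum_range_O9_three_mul_two_pow (L : ℕ) :
    ∑ e ∈ Finset.range (L + 1), O9 (3 * 2 ^ e) = 8 * 2 ^ L - 3 := by
  induction L with
  | zero => simp [O9]
  | succ L ih =>
    rw [Finset.sum_range_succ, ih, O9_three_mul_two_pow_succ, pow_succ]
    have : 1 ≤ 2 ^ L := Nat.one_le_two_pow
    omega

lemma pi9_eq_O9_one_add_sum {N L : ℕ} (hlow : 3 * 2 ^ L ≤ N) (hhigh : N < 3 * 2 ^ (L + 1)) :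
    pi9 N = O9 1 + ∑ e ∈ Finset.range (L + 1), O9 (3 * 2 ^ e) := by
  have hinj : Set.InjOn (fun e ↦ 3 * 2 ^ e) (Finset.range (L + 1)) := fun a _ b _ hab ↦
    Nat.pow_right_injective le_rfl (Nat.eq_of_mul_eq_mul_left (by norm_num) hab)
  have h1 : 1 ∉ (Finset.range (L + 1)).image (fun e ↦ 3 * 2 ^ e) := by
    simp only [Finset.mem_image, not_exists, not_and]
    omega
  rw [← Finset.sum_image hinj, ← Finset.sum_insert h1, pi9]
  symm
  apply Finset.sum_subset
  · intro n hn
    simp only [Finset.mem_insert, Finset.mem_image, Finset.mem_range] at hn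
    rcases hn with rfl | ⟨e, he, rfl⟩
    · exact Finset.mem_Icc.2 ⟨le_rfl, by omega⟩
    · have : 2 ^ e ≤ 2 ^ L := Nat.pow_le_pow_right two_pos (by omega)
      exact Finset.mem_Icc.2 ⟨by have := Nat.one_le_two_pow (n := e); omega, by omega⟩
  · intro n hn hnS
    simp only [Finset.mem_insert, Finset.mem_image, Finset.mem_range, not_or, not_exists,
      not_and] at hnS
    refine O9_eq_zero_of_ne hnS.1 fun e he ↦ hnS.2 e ?_ he.symm
    have : 2 ^ e < 2 ^ (L + 1) := by have := (Finset.mem_Icc.1 hn).2; omega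
    exact (Nat.pow_lt_pow_iff_right (by norm_num)).1 this

lemma pi9_eq_of_three_le (N : ℕ) (hN : 3 ≤ N) : pi9 N = 8 * 2 ^ Nat.log 2 (N / 3) - 2 := by
  have hlow := Nat.pow_log_le_self 2 (show N / 3 ≠ 0 by omega)
  have hhigh := Nat.lt_pow_succ_log_self one_lt_two (N / 3)
  rw [Nat.succ_eq_add_one, pow_succ] at hhigh
  rw [pi9_eq_O9_one_add_sum (L := Nat.log 2 (N / 3)) (by omega) (by rw [pow_succ]; omega),
    sum_range_O9_three_mul_two_pow]
  have : 1 ≤ 2 ^ Nat.log 2 (N / 3) := Nat.one_le_two_pow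
  rw [O9, if_pos rfl]
  omega

lemma Real.rpow_neg_fract_logb {b x : ℝ} (hb : 0 < b) (hb1 : b ≠ 1) (hx : 0 < x) :
    b ^ (-Int.fract (Real.logb b x)) = b ^ ⌊Real.logb b x⌋ / x := by
  rw [Int.fract, neg_sub, Real.rpow_sub hb, Real.rpow_logb hb hb1 hx, Real.rpow_intCast]

lemma Real.floor_logb_natCast_div {b n d : ℕ} (hdn : d ≤ n) (hd : 0 < d) :
    ⌊Real.logb b ((n : ℝ) / d)⌋ = Nat.log b (n / d) := by
  have hone : (1 : ℝ) ≤ n / d := by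
    rw [one_le_div (by exact_mod_cast hd)]; exact_mod_cast hdn
  rw [Real.floor_logb_natCast (by positivity), Int.log_of_one_le_right _ hone,
    Nat.floor_div_eq_div]

theorem exact_orbit_formula_cubert5 (N : ℕ) (hN : 6 ≤ N) :
    (pi9 N : ℝ) = (8 / 3) * (2 : ℝ) ^ (-(Int.fract (Real.logb 2 ((N : ℝ) / 3)))) * N - 2 := by
  have hN3 : (0 : ℝ) < N / 3 := by positivity
  have hfloor := Real.floor_logb_natCast_div (b := 2) (n := N) (d := 3) (by omega) three_pos
  have hpow : 2 ≤ 8 * 2 ^ Nat.log 2 (N / 3) := by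
    have := Nat.one_le_two_pow (n := Nat.log 2 (N / 3)); omega
  push_cast at hfloor
  rw [Real.rpow_neg_fract_logb two_pos (by norm_num) hN3, hfloor, zpow_natCast,
    pi9_eq_of_three_le N (by omega), Nat.cast_sub hpow]
  push_cast
  field_simp
end

section
/- With π(N) = 1 + (2/3)·Σ_{e≥0, 3^e≤N} 3^{3^e}/3^e, one has limsup_{N→∞} N·π(N)/3^N = 2/3 and liminf_{N→∞} N·π(N)/3^N = 0. -/
noncomputable def pi13 (N : ℕ) : ℝ :=
  1 + (2 / 3) * ∑ e ∈ (Finset.range (N + 1)).filter (fun e => 3 ^ e ≤ N),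
    ((3 : ℝ) ^ (3 ^ e) / 3 ^ e)

/-!
Write `N * pi13 N / 3 ^ N = N / 3 ^ N + (2 / 3) * ∑_{3^e ≤ N} t N e` with
`t N e = (N / 3^e) * 3^{-(N - 3^e)}` (`Pi13.orbitTerm`). If `N = 3^e + d` then
`t N e ≤ (1 + d) / 3^d ≤ (2/3)^d`, so only summands with `3^e` close to `N` matter. Below the top
index `E = log₃ N` every summand has `d ≥ E`, so together they contribute at most
`E (2/3)^E → 0`, while the top summand is at most `1` and equals `1` at `N = 3^E`: this gives the
limsup `2/3`. At `N = 3^k - 1` even the top summand has `d ≥ k`, which gives the liminf `0`.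
-/

open Filter Finset Topology

theorem Nat.tendsto_log_atTop {b : ℕ} (hb : 1 < b) : Tendsto (Nat.log b) atTop atTop :=
  tendsto_atTop_atTop_of_monotone (fun _ _ h => Nat.log_mono_right h)
    fun k => ⟨b ^ k, (Nat.log_pow hb k).ge⟩

theorem Nat.filter_pow_le_eq_range_log {b N : ℕ} (hb : 1 < b) (hN : N ≠ 0) :
    (range (N + 1)).filter (fun e => b ^ e ≤ N) = range (Nat.log b N + 1) := by
  ext e
  simp only [mem_filter, mem_range, Nat.lt_succ_iff, ← Nat.le_log_iff_pow_le hb hN]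
  exact and_iff_right_of_imp fun h =>
    (Nat.lt_pow_self hb).le.trans ((Nat.le_log_iff_pow_le hb hN).1 h)

theorem Nat.three_pow_add_lt_three_pow {e m : ℕ} (he : e < m) : 3 ^ e + m < 3 ^ m := by
  obtain ⟨m, rfl⟩ : ∃ m', m = m' + 1 := ⟨m - 1, by omega⟩
  have hpow : 3 ^ e ≤ 3 ^ m := Nat.pow_le_pow_right (by norm_num) (by omega)
  have hlt : m < 3 ^ m := Nat.lt_pow_self (by norm_num)
  rw [pow_succ]
  omega

namespace Pi13

noncomputable def normalized (N : ℕ) : ℝ := N * pi13 N / 3 ^ N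

noncomputable def orbitTerm (N e : ℕ) : ℝ := N * ((3 : ℝ) ^ (3 ^ e) / 3 ^ e) / 3 ^ N

theorem orbitTerm_nonneg (N e : ℕ) : 0 ≤ orbitTerm N e := by
  unfold orbitTerm
  positivity

theorem normalized_nonneg (N : ℕ) : 0 ≤ normalized N := by
  unfold normalized pi13
  positivity

theorem normalized_eq {N : ℕ} (hN : N ≠ 0) :
    normalized N = N / 3 ^ N + (2 / 3) * ∑ e ∈ range (Nat.log 3 N + 1), orbitTerm N e := by
  unfold normalized pi13 orbitTerm
  rw [Nat.filter_pow_le_eq_range_log (by norm_num) hN, mul_add, mul_one, add_div]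
  congr 1
  simp only [mul_sum, sum_div]
  exact sum_congr rfl fun e _ => by ring

theorem orbitTerm_le {N e : ℕ} (h : 3 ^ e ≤ N) : orbitTerm N e ≤ (2 / 3) ^ (N - 3 ^ e) := by
  obtain ⟨d, rfl⟩ := Nat.exists_eq_add_of_le h
  have hone : (1 : ℝ) ≤ 3 ^ e := one_le_pow₀ (by norm_num)
  have hd : (d + 1 : ℝ) ≤ 2 ^ d := by exact_mod_cast Nat.lt_two_pow_self
  calc orbitTerm (3 ^ e + d) e = (3 ^ e + d) / 3 ^ e / 3 ^ d := by
        unfold orbitTerm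
        push_cast
        rw [pow_add]
        field_simp
    _ ≤ (d + 1) / 3 ^ d := by
        gcongr
        rw [div_le_iff₀ (by positivity)]
        nlinarith
    _ ≤ 2 ^ d / 3 ^ d := by gcongr
    _ = (2 / 3) ^ (3 ^ e + d - 3 ^ e) := by rw [Nat.add_sub_cancel_left, div_pow]

theorem orbitTerm_pow_self (k : ℕ) : orbitTerm (3 ^ k) k = 1 := by
  unfold orbitTerm
  push_cast
  field_simp

theorem sum_orbitTerm_le {N m : ℕ} (h : 3 ^ m ≤ N + 1) :
    ∑ e ∈ range m, orbitTerm N e ≤ m * (2 / 3) ^ m :=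
  calc ∑ e ∈ range m, orbitTerm N e ≤ ∑ _e ∈ range m, (2 / 3 : ℝ) ^ m :=
        sum_le_sum fun e he => by
          have := Nat.three_pow_add_lt_three_pow (mem_range.1 he)
          exact (orbitTerm_le (by omega)).trans
            (pow_le_pow_of_le_one (by norm_num) (by norm_num) (by omega))
    _ = m * (2 / 3) ^ m := by simp

noncomputable def upperError (N : ℕ) : ℝ :=
  N / 3 ^ N + (2 / 3) * (Nat.log 3 N * (2 / 3) ^ Nat.log 3 N)

theorem normalized_le {N : ℕ} (hN : N ≠ 0) : normalized N ≤ 2 / 3 + upperError N := by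
  have hpow := Nat.pow_log_le_self 3 hN
  have hlower := sum_orbitTerm_le (m := Nat.log 3 N) (N := N) (by omega)
  have htop : orbitTerm N (Nat.log 3 N) ≤ 1 :=
    (orbitTerm_le hpow).trans (pow_le_one₀ (by norm_num) (by norm_num))
  rw [normalized_eq hN, sum_range_succ]
  unfold upperError
  linarith

theorem tendsto_upperError : Tendsto upperError atTop (𝓝 0) := by
  unfold upperError
  simpa using (tendsto_pow_const_div_const_pow_of_one_lt 1 (by norm_num)).add
    (((tendsto_self_mul_const_pow_of_lt_one (r := 2 / 3) (by norm_num) (by norm_num)).comp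
      (Nat.tendsto_log_atTop (b := 3) (by norm_num))).const_mul (2 / 3))

theorem two_thirds_le_normalized_pow (k : ℕ) : 2 / 3 ≤ normalized (3 ^ k) := by
  have hsum := sum_nonneg fun e (_ : e ∈ range k) => orbitTerm_nonneg (3 ^ k) e
  have hfirst : (0 : ℝ) ≤ ((3 ^ k : ℕ) : ℝ) / 3 ^ 3 ^ k := by positivity
  rw [normalized_eq (by positivity), Nat.log_pow (by norm_num), sum_range_succ,
    orbitTerm_pow_self]
  linarith

theorem normalized_pow_sub_one_le {k : ℕ} (hk : k ≠ 0) :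
    normalized (3 ^ k - 1) ≤
      ((3 ^ k - 1 : ℕ) : ℝ) / 3 ^ (3 ^ k - 1) + (2 / 3) * (k * (2 / 3) ^ k) := by
  have hthree : 3 ≤ 3 ^ k := Nat.le_self_pow hk 3
  have hlog : Nat.log 3 (3 ^ k - 1) + 1 = k := by
    have h₁ : 3 ^ (k - 1) ≤ 3 ^ k - 1 := by
      have : 3 ^ k = 3 * 3 ^ (k - 1) := by rw [← pow_succ', Nat.sub_add_cancel (by omega)]
      omega
    have h₂ : 3 ^ k - 1 < 3 ^ (k - 1 + 1) := by rw [Nat.sub_add_cancel (by omega)]; omega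
    rw [Nat.log_eq_of_pow_le_of_lt_pow h₁ h₂]
    omega
  have hsum := sum_orbitTerm_le (m := k) (N := 3 ^ k - 1) (by omega)
  rw [normalized_eq (by omega), hlog]
  linarith

theorem isBoundedUnder_le_normalized : IsBoundedUnder (· ≤ ·) atTop normalized :=
  (tendsto_upperError.const_add (2 / 3)).isBoundedUnder_le.mono_le
    ((eventually_ne_atTop 0).mono fun _ => normalized_le)

theorem isBoundedUnder_ge_normalized : IsBoundedUnder (· ≥ ·) atTop normalized :=
  isBoundedUnder_of ⟨0, normalized_nonneg⟩

theorem limsup_normalized : limsup normalized atTop = 2 / 3 := by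
  have hbound := tendsto_upperError.const_add (2 / 3)
  rw [add_zero] at hbound
  apply le_antisymm
  · calc limsup normalized atTop ≤ limsup (fun N => 2 / 3 + upperError N) atTop :=
          limsup_le_limsup ((eventually_ne_atTop 0).mono fun _ => normalized_le)
            isBoundedUnder_ge_normalized.isCoboundedUnder_le hbound.isBoundedUnder_le
      _ = 2 / 3 := hbound.limsup_eq
  · exact le_limsup_of_frequently_le
      ((tendsto_pow_atTop_atTop_of_one_lt (by norm_num : 1 < 3)).frequently
        (Frequently.of_forall two_thirds_le_normalized_pow))
      isBoundedUnder_le_normalized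

theorem liminf_normalized : liminf normalized atTop = 0 := by
  have hs : Tendsto (fun k => 3 ^ k - 1) atTop atTop :=
    (tendsto_sub_atTop_nat 1).comp (tendsto_pow_atTop_atTop_of_one_lt (by norm_num : 1 < 3))
  have hbound : Tendsto (fun k : ℕ => ((3 ^ k - 1 : ℕ) : ℝ) / 3 ^ (3 ^ k - 1)
      + (2 / 3) * (k * (2 / 3) ^ k)) atTop (𝓝 0) := by
    simpa using ((tendsto_pow_const_div_const_pow_of_one_lt 1 (by norm_num)).comp hs).add
      ((tendsto_self_mul_const_pow_of_lt_one (r := 2 / 3) (by norm_num) (by norm_num)).const_mul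
        (2 / 3))
  have hsub : Tendsto (normalized ∘ fun k => 3 ^ k - 1) atTop (𝓝 0) :=
    tendsto_of_tendsto_of_tendsto_of_le_of_le' tendsto_const_nhds hbound
      (Eventually.of_forall fun _ => normalized_nonneg _)
      ((eventually_ne_atTop 0).mono fun _ => normalized_pow_sub_one_le)
  apply le_antisymm
  · calc liminf normalized atTop ≤ liminf (normalized ∘ fun k => 3 ^ k - 1) atTop :=
          hs.liminf_le_liminf_comp hsub.isBoundedUnder_le.isCoboundedUnder_ge
            isBoundedUnder_ge_normalized
      _ = 0 := hsub.liminf_eq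
  · exact le_liminf_of_le isBoundedUnder_le_normalized.isCoboundedUnder_ge
      (Eventually.of_forall normalized_nonneg)

end Pi13

theorem limsup_liminf_F3t :
    Filter.limsup (fun N : ℕ => (N : ℝ) * pi13 N / 3 ^ N) Filter.atTop = 2 / 3 ∧
    Filter.liminf (fun N : ℕ => (N : ℝ) * pi13 N / 3 ^ N) Filter.atTop = 0 :=
  ⟨Pi13.limsup_normalized, Pi13.liminf_normalized⟩
end

section
/- Let P be a finite set of primes, m = (m_p) ∈ Z^P with m_p ≤ 0 for all p, and let S_x = Σ_{e ∈ N_0^P, Π p^{e_p} ≤ x} Π p^{m_p e_p}. Let j = |{p ∈ P : m_p = 0}|. Then there exist constants B ≥ A > 0 and x₀ such that A (log x)^j ≤ S_x ≤ B (log x)^j for all x > x₀. -/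
open Classical in
noncomputable def S14 (P : Finset ℕ) (m : ℕ → ℤ) (x : ℝ) : ℝ :=
  ∑' e : ({p // p ∈ P} → ℕ),
    if (∏ p : {p // p ∈ P}, ((p : ℕ) : ℝ) ^ (e p : ℕ)) ≤ x then
      ∏ p : {p // p ∈ P}, ((p : ℕ) : ℝ) ^ (m p * (e p : ℤ))
    else 0

/-!
Every exponent vector with `∏ p ^ e p ≤ x` has all `e p ≤ log₂ x`, so the sum is finite and
bounded by the product over `p` of the one-variable sums `∑_{k ≤ log₂ x} p ^ (m p * k)`:
a factor with `m p = 0` is `O(log x)`, one with `m p < 0` is a geometric series bounded by `2`.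
Conversely, the vectors with `e p = 0` where `m p ≠ 0` and `e p ≤ M` elsewhere, for
`M ≈ log x / log ∏ p`, each contribute `1`, and there are `≫ (log x) ^ j` of them.
-/

open Finset Real

namespace TruncatedSum

variable {ι : Type*} [Fintype ι] {b : ι → ℝ} {m : ι → ℤ} {x : ℝ}

variable (b m x) in
noncomputable def term (e : ι → ℕ) : ℝ :=
  if ∏ i, b i ^ e i ≤ x then ∏ i, b i ^ (m i * (e i : ℤ)) else 0

variable (m) in
def numZero : ℕ := #{i | m i = 0}

lemma term_nonneg (hb : ∀ i, 0 ≤ b i) (e : ι → ℕ) : 0 ≤ term b m x e := by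
  unfold term
  split_ifs
  · exact prod_nonneg fun i _ => zpow_nonneg (hb i) _
  · rfl

lemma le_floor_logb_of_prod_pow_le (hb : ∀ i, 2 ≤ b i) {e : ι → ℕ}
    (he : ∏ i, b i ^ e i ≤ x) (i : ι) : e i ≤ ⌊logb 2 x⌋₊ := by
  have h2 : (2 : ℝ) ^ e i ≤ x := calc
    (2 : ℝ) ^ e i ≤ b i ^ e i := pow_le_pow_left₀ zero_le_two (hb i) _
    _ = ∏ j ∈ {i}, b j ^ e j := (prod_singleton _ _).symm
    _ ≤ ∏ j, b j ^ e j := prod_le_prod_of_subset_of_one_le (subset_univ _)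
        (fun j _ => pow_nonneg (zero_le_two.trans (hb j)) _)
        (fun j _ _ => one_le_pow₀ (one_le_two.trans (hb j)))
    _ ≤ x := he
  apply Nat.le_floor
  rw [le_logb_iff_rpow_le one_lt_two ((pow_pos two_pos _).trans_le h2)]
  exact_mod_cast h2

variable [DecidableEq ι]

variable (x) in
noncomputable def box : Finset (ι → ℕ) :=
  Fintype.piFinset fun _ => range (⌊logb 2 x⌋₊ + 1)

lemma term_eq_zero_of_notMem_box (hb : ∀ i, 2 ≤ b i) {e : ι → ℕ} (he : e ∉ box x) :
    term b m x e = 0 := by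
  refine if_neg fun hle => he ?_
  exact Fintype.mem_piFinset.2 fun i =>
    mem_range.2 (Nat.lt_succ_of_le (le_floor_logb_of_prod_pow_le hb hle i))

lemma tsum_term_eq_sum_box (hb : ∀ i, 2 ≤ b i) :
    ∑' e, term b m x e = ∑ e ∈ box x, term b m x e :=
  tsum_eq_sum fun _ he => term_eq_zero_of_notMem_box hb he

lemma summable_term (hb : ∀ i, 2 ≤ b i) : Summable (term b m x) :=
  summable_of_ne_finset_zero fun _ he => term_eq_zero_of_notMem_box hb he

lemma sum_zpow_mul_le {c : ℝ} (hc : 2 ≤ c) {k : ℤ} (hk : k ≤ 0) (n : ℕ) :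
    ∑ l ∈ range n, c ^ (k * l) ≤ if k = 0 then (n : ℝ) else 2 := by
  split_ifs with h0
  · simp [h0]
  · calc ∑ l ∈ range n, c ^ (k * l) ≤ ∑ l ∈ range n, (1 / 2 : ℝ) ^ l := by
          refine sum_le_sum fun l _ => ?_
          rw [zpow_mul, zpow_natCast]
          refine pow_le_pow_left₀ (zpow_nonneg (by linarith) _) ?_ l
          calc c ^ k ≤ c ^ (-1 : ℤ) := zpow_le_zpow_right₀ (by linarith) (by omega)
            _ ≤ 1 / 2 := by
              rw [zpow_neg_one, one_div]
              exact inv_anti₀ two_pos hc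
      _ ≤ 2 := sum_geometric_two_le n

lemma tsum_term_le (hb : ∀ i, 2 ≤ b i) (hm : ∀ i, m i ≤ 0) :
    ∑' e, term b m x e ≤ ((⌊logb 2 x⌋₊ : ℝ) + 1) ^ numZero m * 2 ^ Fintype.card ι := by
  set K := ⌊logb 2 x⌋₊
  calc ∑' e, term b m x e = ∑ e ∈ box x, term b m x e := tsum_term_eq_sum_box hb
    _ ≤ ∑ e ∈ box x, ∏ i, b i ^ (m i * (e i : ℤ)) := by
      refine sum_le_sum fun e _ => ?_
      unfold term
      split_ifs
      · rfl
      · exact prod_nonneg fun i _ => zpow_nonneg (zero_le_two.trans (hb i)) _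
    _ = ∏ i, ∑ l ∈ range (K + 1), b i ^ (m i * (l : ℤ)) :=
      (prod_univ_sum (fun _ => range (K + 1)) fun i l => b i ^ (m i * (l : ℤ))).symm
    _ ≤ ∏ i, if m i = 0 then ((K : ℝ) + 1) else 2 := by
      refine prod_le_prod (fun i _ => sum_nonneg fun l _ => zpow_nonneg ?_ _) fun i _ => ?_
      · exact zero_le_two.trans (hb i)
      · exact_mod_cast sum_zpow_mul_le (hb i) (hm i) (K + 1)
    _ = ((K : ℝ) + 1) ^ numZero m * 2 ^ #{i | m i ≠ 0} := by
      rw [prod_ite, prod_const, prod_const, numZero]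
    _ ≤ ((K : ℝ) + 1) ^ numZero m * 2 ^ Fintype.card ι := by
      gcongr
      · exact one_le_two
      · exact card_filter_le _ _

lemma pow_numZero_le_tsum_term (hb : ∀ i, 2 ≤ b i) {M : ℕ} (hM : ∏ i, b i ^ M ≤ x) :
    ((M : ℝ) + 1) ^ numZero m ≤ ∑' e, term b m x e := by
  set E := Fintype.piFinset fun i => if m i = 0 then range (M + 1) else {0}
  have term_eq_one : ∀ e ∈ E, term b m x e = 1 := by
    intro e he
    have he' : ∀ i, e i ≤ M ∧ m i * (e i : ℤ) = 0 := by
      intro i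
      have := Fintype.mem_piFinset.1 he i
      split_ifs at this with h
      · exact ⟨Nat.lt_succ_iff.1 (mem_range.1 this), by simp [h]⟩
      · simp [mem_singleton.1 this]
    rw [term, if_pos, prod_eq_one fun i _ => by rw [(he' i).2, zpow_zero]]
    refine (prod_le_prod (fun i _ => pow_nonneg ?_ _) fun i _ => ?_).trans hM
    · exact zero_le_two.trans (hb i)
    · exact pow_le_pow_right₀ (one_le_two.trans (hb i)) (he' i).1
  have card_E : #E = (M + 1) ^ numZero m := by
    simp only [E, Fintype.card_piFinset, apply_ite card, card_range, card_singleton, prod_ite,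
      prod_const, one_pow, mul_one, numZero]
  calc ((M : ℝ) + 1) ^ numZero m = ∑ e ∈ E, term b m x e := by
        rw [sum_congr rfl term_eq_one, sum_const, card_E, nsmul_one, Nat.cast_pow, Nat.cast_succ]
    _ ≤ ∑' e, term b m x e := (summable_term hb).sum_le_tsum E fun e _ =>
        term_nonneg (fun i => zero_le_two.trans (hb i)) e

lemma log_div_pow_le_tsum_term (hb : ∀ i, 2 ≤ b i) (hx : 1 ≤ x) :
    (log x / (log (∏ i, b i) + 1)) ^ numZero m ≤ ∑' e, term b m x e := by
  set R := log (∏ i, b i)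
  set M := ⌊log x / (R + 1)⌋₊
  have hR : 0 ≤ R := log_nonneg (one_le_prod fun i _ => one_le_two.trans (hb i))
  have hlogx : 0 ≤ log x := log_nonneg hx
  have hM : ∏ i, b i ^ M ≤ x := by
    rw [prod_pow, pow_le_iff_le_log (prod_pos fun i _ => by linarith [hb i]) (by linarith)]
    calc (M : ℝ) * R ≤ log x / (R + 1) * (R + 1) := by
          gcongr
          · exact Nat.floor_le (by positivity)
          · linarith
      _ = log x := div_mul_cancel₀ _ (by linarith)
  calc (log x / (R + 1)) ^ numZero m ≤ ((M : ℝ) + 1) ^ numZero m := by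
        gcongr
        exact (Nat.lt_floor_add_one _).le
    _ ≤ ∑' e, term b m x e := pow_numZero_le_tsum_term hb hM

lemma tsum_term_le_log_pow (hb : ∀ i, 2 ≤ b i) (hm : ∀ i, m i ≤ 0) (hx : 2 ≤ x) :
    ∑' e, term b m x e ≤ (2 / log 2 * log x) ^ numZero m * 2 ^ Fintype.card ι := by
  refine (tsum_term_le hb hm).trans ?_
  have hlogb : 1 ≤ logb 2 x := by
    rw [le_logb_iff_rpow_le one_lt_two (by linarith), rpow_one]
    exact hx
  gcongr
  calc (⌊logb 2 x⌋₊ : ℝ) + 1 ≤ 2 * logb 2 x := by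
        linarith [Nat.floor_le (zero_le_one.trans hlogb)]
    _ = 2 / log 2 * log x := by rw [logb]; ring

theorem exists_log_pow_bounds_tsum_term (hb : ∀ i, 2 ≤ b i) (hm : ∀ i, m i ≤ 0) :
    ∃ A B x₀ : ℝ, 0 < A ∧ A ≤ B ∧ ∀ x : ℝ, x₀ < x →
      A * log x ^ numZero m ≤ ∑' e, term b m x e ∧
      ∑' e, term b m x e ≤ B * log x ^ numZero m := by
  set R := log (∏ i, b i)
  have hR : 0 ≤ R := log_nonneg (one_le_prod fun i _ => one_le_two.trans (hb i))
  have hlog2 : log 2 ≤ 2 := by linarith [log_le_sub_one_of_pos (zero_lt_two (α := ℝ))]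
  -- `R + 1` rather than `R`: for empty `ι` we have `R = 0`, and `0⁻¹ = 0` would make `A = 0`.
  refine ⟨(R + 1)⁻¹ ^ numZero m, (2 / log 2) ^ numZero m * 2 ^ Fintype.card ι, 2,
    by positivity, ?_, fun x hx => ⟨?_, ?_⟩⟩
  · calc (R + 1)⁻¹ ^ numZero m ≤ 1 :=
          pow_le_one₀ (by positivity) (inv_le_one_of_one_le₀ (by linarith))
      _ ≤ (2 / log 2) ^ numZero m * 2 ^ Fintype.card ι := by
        refine one_le_mul_of_one_le_of_one_le (one_le_pow₀ ?_) (one_le_pow₀ one_le_two)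
        rw [le_div_iff₀ (log_pos one_lt_two)]
        linarith
  · rw [← mul_pow, inv_mul_eq_div]
    exact log_div_pow_le_tsum_term hb (by linarith)
  · rw [mul_right_comm, ← mul_pow]
    exact tsum_term_le_log_pow hb hm hx.le

end TruncatedSum

theorem chebyshev_estimate_nonpositive (P : Finset ℕ) (hP : ∀ p ∈ P, Nat.Prime p)
    (m : ℕ → ℤ) (hm : ∀ p ∈ P, m p ≤ 0) :
    ∃ A B x₀ : ℝ, 0 < A ∧ A ≤ B ∧ ∀ x : ℝ, x₀ < x →
      A * Real.log x ^ (P.filter (fun p => m p = 0)).card ≤ S14 P m x ∧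
      S14 P m x ≤ B * Real.log x ^ (P.filter (fun p => m p = 0)).card := by
  have hS : ∀ x, S14 P m x =
      ∑' e, TruncatedSum.term (fun p : P => (p : ℝ)) (fun p => m p) x e := fun _ => rfl
  have hj : TruncatedSum.numZero (fun p : P => m p) = #{p ∈ P | m p = 0} := by
    rw [TruncatedSum.numZero, card_filter, card_filter,
      sum_coe_sort P fun p => if m p = 0 then 1 else 0]
  simp only [hS, ← hj]
  exact TruncatedSum.exists_log_pow_bounds_tsum_term
    (fun p => by exact_mod_cast (hP p p.2).two_le) fun p => hm p p.2
end

section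
/- Let P be a finite set of primes, m = (m_p) ∈ Z^P, and S_x = Σ_{e ∈ N_0^P, Π p^{e_p} ≤ x} Π p^{m_p e_p}. Set m = max{0, m_p : p ∈ P}; assume m > 0 and let j = |{p : m_p = m}| − 1. Then there exist B ≥ A > 0 and x₀ such that A x^m (log x)^j ≤ S_x ≤ B x^m (log x)^j for all x > x₀. -/
open Classical in
noncomputable def S15 (P : Finset ℕ) (m : ℕ → ℤ) (x : ℝ) : ℝ :=
  ∑' e : ({p // p ∈ P} → ℕ),
    if (∏ p : {p // p ∈ P}, ((p : ℕ) : ℝ) ^ (e p : ℕ)) ≤ x then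
      ∏ p : {p // p ∈ P}, ((p : ℕ) : ℝ) ^ (m p * (e p : ℤ))
    else 0

lemma sum_geom_le_two {r : ℝ} (h0 : 0 ≤ r) (h2 : r ≤ 1/2) (n : ℕ) :
    ∑ c ∈ Finset.range n, r ^ c ≤ 2 := by
  calc ∑ c ∈ Finset.range n, r ^ c ≤ ∑ c ∈ Finset.range n, (1/2 : ℝ) ^ c :=
        Finset.sum_le_sum fun c _ => pow_le_pow_left₀ h0 h2 c
    _ ≤ 2 := sum_geometric_two_le n

lemma prod_split {ι : Type*} [Fintype ι] [DecidableEq ι] (a₀ : ι) (H : ι → ℕ → ℝ) (c : ℕ)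
    (e' : {i // i ≠ a₀} → ℕ) :
    (∏ a, H a (if h : a = a₀ then c else e' ⟨a, h⟩))
      = H a₀ c * ∏ a : {i // i ≠ a₀}, H a.1 (e' a) := by
  rw [← Finset.mul_prod_erase Finset.univ _ (Finset.mem_univ a₀), dif_pos rfl]
  congr 1
  rw [Finset.prod_subtype (p := fun i => i ≠ a₀) (Finset.univ.erase a₀)
      (fun x => by simp [Finset.mem_erase])
      (fun a => H a (if h : a = a₀ then c else e' ⟨a, h⟩))]
  exact Finset.prod_congr rfl fun a _ => by rw [dif_neg a.2]

lemma sum_piFinset_split {ι : Type*} [Fintype ι] [DecidableEq ι] (a₀ : ι) (n : ℕ)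
    (g : (ι → ℕ) → ℝ) :
    ∑ e ∈ Fintype.piFinset (fun _ : ι => Finset.range n), g e
      = ∑ c ∈ Finset.range n,
          ∑ e' ∈ Fintype.piFinset (fun _ : {i // i ≠ a₀} => Finset.range n),
            g (fun a => if h : a = a₀ then c else e' ⟨a, h⟩) := by
  rw [← Finset.sum_product']
  refine Finset.sum_nbij' (i := fun e => (e a₀, fun a => e a.1))
    (j := fun p a => if h : a = a₀ then p.1 else p.2 ⟨a, h⟩) ?_ ?_ ?_ ?_ ?_
  · intro e he
    rw [Fintype.mem_piFinset] at he
    simp only [Finset.mem_product, Fintype.mem_piFinset]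
    exact ⟨he a₀, fun a => he a.1⟩
  · intro p hp
    simp only [Finset.mem_product, Fintype.mem_piFinset] at hp
    rw [Fintype.mem_piFinset]
    intro a
    by_cases h : a = a₀
    · simpa [h] using hp.1
    · simpa [h] using hp.2 ⟨a, h⟩
  · intro e he
    funext a
    by_cases h : a = a₀ <;> simp [h]
  · intro p hp
    refine Prod.ext (by simp) ?_
    funext a
    simp [a.2]
  · intro e he
    congr 1
    funext a
    by_cases h : a = a₀ <;> simp [h]
lemma one_le_prodR {ι : Type*} {s : Finset ι} {f : ι → ℝ} (h : ∀ i ∈ s, 1 ≤ f i) :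
    1 ≤ ∏ i ∈ s, f i := by
  calc (1:ℝ) = ∏ _i ∈ s, 1 := by simp
    _ ≤ ∏ i ∈ s, f i := Finset.prod_le_prod (by simp) h

lemma single_le_prodR {ι : Type*} {s : Finset ι} {f : ι → ℝ} (h : ∀ i ∈ s, 1 ≤ f i)
    {a : ι} (ha : a ∈ s) : f a ≤ ∏ i ∈ s, f i := by
  classical
  rw [← Finset.mul_prod_erase s f ha]
  exact le_mul_of_one_le_right (le_trans zero_le_one (h a ha))
    (one_le_prodR fun i hi => h i (Finset.mem_of_mem_erase hi))

open Classical in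
lemma S15_eq_sum (P : Finset ℕ) (hP : ∀ p ∈ P, Nat.Prime p) (m : ℕ → ℤ) (x : ℝ)
    (N : ℕ) (hN : x < 2 ^ N) :
    S15 P m x = ∑ e ∈ Fintype.piFinset (fun _ : {p // p ∈ P} => Finset.range (N + 1)),
      (if (∏ p : {p // p ∈ P}, ((p : ℕ) : ℝ) ^ (e p : ℕ)) ≤ x then
        ∏ p : {p // p ∈ P}, ((p : ℕ) : ℝ) ^ (m p * (e p : ℤ)) else 0) := by
  refine tsum_eq_sum ?_
  intro e he
  rw [Fintype.mem_piFinset] at he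
  push_neg at he
  obtain ⟨a, ha⟩ := he
  rw [Finset.mem_range, not_lt] at ha
  rw [if_neg]
  push_neg
  have h2a : (2:ℝ) ≤ ((a : ℕ) : ℝ) := by exact_mod_cast (hP a.1 a.2).two_le
  calc x < 2 ^ N := hN
    _ ≤ ((a:ℕ):ℝ) ^ (e a) := by
        calc (2:ℝ) ^ N ≤ (2:ℝ) ^ (e a) := by
              apply pow_le_pow_right₀ one_le_two (by omega)
          _ ≤ ((a:ℕ):ℝ) ^ (e a) := pow_le_pow_left₀ (by norm_num) h2a _
    _ ≤ ∏ p : {p // p ∈ P}, ((p:ℕ):ℝ) ^ (e p) := by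
        refine single_le_prodR (f := fun p : {p // p ∈ P} => ((p:ℕ):ℝ) ^ (e p))
          (fun b _ => ?_) (Finset.mem_univ a)
        have h2b : (2:ℝ) ≤ ((b : ℕ) : ℝ) := by exact_mod_cast (hP b.1 b.2).two_le
        exact one_le_pow₀ (by linarith)

lemma card_filter_pair (P : Finset ℕ) (m : ℕ → ℤ) (M : ℤ) (p₀ : ℕ) (hp₀ : p₀ ∈ P)
    (hm : m p₀ = M) :
    (Finset.univ.filter
        (fun a : {p // p ∈ P} => m a.1 = M ∧ a ≠ (⟨p₀, hp₀⟩ : {p // p ∈ P}))).card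
      = (P.filter (fun p => m p = M)).card - 1 := by
  classical
  have h : (Finset.univ.filter
        (fun a : {p // p ∈ P} => m a.1 = M ∧ a ≠ (⟨p₀, hp₀⟩ : {p // p ∈ P}))).card
      = ((P.filter (fun p => m p = M)).erase p₀).card := by
    apply Finset.card_bij (fun a _ => a.1)
    · intro a ha
      simp only [Finset.mem_filter, Finset.mem_univ, true_and] at ha
      simp only [Finset.mem_erase, Finset.mem_filter]
      exact ⟨fun h => ha.2 (Subtype.ext h), a.2, ha.1⟩
    · intro a _ b _ hab
      exact Subtype.ext hab
    · intro p hp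
      simp only [Finset.mem_erase, Finset.mem_filter] at hp
      exact ⟨⟨p, hp.2.1⟩, by simp [hp.2.2, hp.1, Subtype.ext_iff], rfl⟩
  rw [h, Finset.card_erase_of_mem (by simp [hp₀, hm])]

lemma card_filter_sub (P : Finset ℕ) (m : ℕ → ℤ) (M : ℤ) (a₀ : {p // p ∈ P}) :
    (Finset.univ.filter (fun a : {a : {p // p ∈ P} // a ≠ a₀} => m a.1.1 = M)).card
      = (Finset.univ.filter (fun a : {p // p ∈ P} => m a.1 = M ∧ a ≠ a₀)).card := by
  classical
  apply Finset.card_bij (fun a _ => a.1)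
  · intro a ha
    simp only [Finset.mem_filter, Finset.mem_univ, true_and] at ha ⊢
    exact ⟨ha, a.2⟩
  · intro a _ b _ hab
    exact Subtype.ext hab
  · intro a ha
    simp only [Finset.mem_filter, Finset.mem_univ, true_and] at ha
    exact ⟨⟨a, ha.2⟩, by simp [ha.1], rfl⟩
open Classical in
lemma inner_sum_le (p₀ : ℕ) (hp : 2 ≤ p₀) (Mn : ℕ) (hMn : 1 ≤ Mn) (x n' v' : ℝ)
    (hn' : 0 < n') (hv' : 0 ≤ v') (hx : 0 < x) (N : ℕ) :
    ∑ c ∈ Finset.range (N+1),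
        (if (p₀:ℝ)^c * n' ≤ x then ((p₀:ℝ)^c * n')^Mn * v' else 0)
      ≤ 2 * x^Mn * v' := by
  have hp0 : (2:ℝ) ≤ (p₀:ℝ) := by exact_mod_cast hp
  rw [← Finset.sum_filter]
  set s := (Finset.range (N+1)).filter (fun c => (p₀:ℝ)^c * n' ≤ x) with hs
  rcases s.eq_empty_or_nonempty with h | h
  · rw [h, Finset.sum_empty]
    positivity
  · set C := s.max' h with hC
    clear_value C
    have hCs : C ∈ s := hC ▸ s.max'_mem h
    have hCx : (p₀:ℝ)^C * n' ≤ x := (Finset.mem_filter.mp hCs).2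
    have key : ∀ c ∈ s, ((p₀:ℝ)^c * n')^Mn * v' ≤ (x^Mn * v') * (1/2:ℝ)^(C - c) := by
      intro c hc
      have hcC : c ≤ C := hC ▸ s.le_max' c hc
      obtain ⟨d, hCd⟩ : ∃ d, C = c + d := ⟨C - c, (Nat.add_sub_cancel' hcC).symm⟩
      have hd : C - c = d := by omega
      rw [hd]
      rw [hCd] at hCx
      have h2d : ((p₀:ℝ)^c * n')^Mn * 2^d ≤ x^Mn := by
        calc ((p₀:ℝ)^c * n')^Mn * 2^d ≤ ((p₀:ℝ)^c * n')^Mn * ((p₀:ℝ)^Mn)^d := by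
              apply mul_le_mul_of_nonneg_left _ (by positivity)
              apply pow_le_pow_left₀ (by norm_num)
              calc (2:ℝ) ≤ (p₀:ℝ) := hp0
                _ = (p₀:ℝ)^1 := (pow_one _).symm
                _ ≤ (p₀:ℝ)^Mn := pow_le_pow_right₀ (by linarith) hMn
          _ = ((p₀:ℝ)^(c+d) * n')^Mn := by rw [pow_add]; ring
          _ ≤ x^Mn := pow_le_pow_left₀ (by positivity) hCx _
      have h2dpos : (0:ℝ) < 2^d := by positivity
      calc ((p₀:ℝ)^c * n')^Mn * v' ≤ (x^Mn / 2^d) * v' := by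
            apply mul_le_mul_of_nonneg_right _ hv'
            rw [le_div_iff₀ h2dpos]
            exact h2d
        _ = (x^Mn * v') * (1/2:ℝ)^d := by
            rw [div_pow, one_pow]
            ring
    calc ∑ c ∈ s, ((p₀:ℝ)^c * n')^Mn * v' ≤ ∑ c ∈ s, (x^Mn * v') * (1/2:ℝ)^(C - c) :=
          Finset.sum_le_sum key
      _ ≤ ∑ c ∈ Finset.range (C+1), (x^Mn * v') * (1/2:ℝ)^(C - c) := by
          apply Finset.sum_le_sum_of_subset_of_nonneg
          · intro c hc
            exact Finset.mem_range.mpr (Nat.lt_succ_of_le (hC ▸ s.le_max' c hc))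
          · intro c _ _
            positivity
      _ = (x^Mn * v') * ∑ c ∈ Finset.range (C+1), (1/2:ℝ)^(C - c) := by
          rw [Finset.mul_sum]
      _ = (x^Mn * v') * ∑ d ∈ Finset.range (C+1), (1/2:ℝ)^d := by
          congr 1
          have := Finset.sum_range_reflect (fun d => (1/2:ℝ)^d) (C+1)
          simpa using this
      _ ≤ (x^Mn * v') * 2 := by
          apply mul_le_mul_of_nonneg_left (sum_geom_le_two (by norm_num) (by norm_num) _)
            (by positivity)
      _ = 2 * x^Mn * v' := by ring

lemma prod_update_of_eq_one {ι : Type*} [Fintype ι] [DecidableEq ι] (a₀ : ι)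
    (H : ι → ℕ → ℝ) (e' : ι → ℕ) (c : ℕ) (h0 : e' a₀ = 0) (h1 : H a₀ 0 = 1) :
    ∏ a, H a (Function.update e' a₀ c a) = H a₀ c * ∏ a, H a (e' a) := by
  rw [← Finset.mul_prod_erase Finset.univ (fun a => H a (Function.update e' a₀ c a))
        (Finset.mem_univ a₀),
      ← Finset.mul_prod_erase Finset.univ (fun a => H a (e' a)) (Finset.mem_univ a₀)]
  simp only [Function.update_self, h0, h1, one_mul]
  congr 1
  refine Finset.prod_congr rfl fun a ha => ?_
  rw [Function.update_of_ne (Finset.mem_erase.mp ha).1]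

set_option maxHeartbeats 1600000 in
theorem chebyshev_estimate_positive (P : Finset ℕ) (hP : ∀ p ∈ P, Nat.Prime p)
    (m : ℕ → ℤ) (M : ℤ) (hMpos : 0 < M)
    (hub : ∀ p ∈ P, m p ≤ M) (hattained : ∃ p ∈ P, m p = M) :
    ∃ A B x₀ : ℝ, 0 < A ∧ A ≤ B ∧ ∀ x : ℝ, x₀ < x →
      A * x ^ M * Real.log x ^ ((P.filter (fun p => m p = M)).card - 1) ≤ S15 P m x ∧
      S15 P m x ≤ B * x ^ M * Real.log x ^ ((P.filter (fun p => m p = M)).card - 1) := by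
  classical
  obtain ⟨p₀, hp₀P, hp₀M⟩ := hattained
  set k := (P.filter fun p => m p = M).card with hk
  set Mn := M.toNat with hMndef
  have hMM : (Mn : ℤ) = M := Int.toNat_of_nonneg hMpos.le
  have hMn1 : 1 ≤ Mn := by omega
  have hp₀2 : 2 ≤ p₀ := (hP p₀ hp₀P).two_le
  have hp₀R : (2:ℝ) ≤ (p₀:ℝ) := by exact_mod_cast hp₀2
  set a₀ : {p // p ∈ P} := ⟨p₀, hp₀P⟩ with ha₀
  set G := ∏ p ∈ P, p with hG
  have hG2 : 2 ≤ G := by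
    calc 2 ≤ p₀ := hp₀2
      _ ≤ ∏ p ∈ P, p := Finset.single_le_prod' (fun p hp => (hP p hp).one_le) hp₀P
  have hGR : (2:ℝ) ≤ (G:ℝ) := by exact_mod_cast hG2
  have hlog2 : (1:ℝ)/2 < Real.log 2 := by
    have := Real.log_two_gt_d9
    norm_num at this ⊢
    linarith
  have hlogG : (1:ℝ)/2 < Real.log G := by
    calc (1:ℝ)/2 < Real.log 2 := hlog2
      _ ≤ Real.log G := Real.log_le_log (by norm_num) hGR
  have hlogG0 : (0:ℝ) < Real.log G := by linarith
  set A : ℝ := ((p₀:ℝ)^Mn)⁻¹ * ((2 * Real.log G)^(k-1))⁻¹ with hA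
  set B : ℝ := 2^(P.card+1) * 4^(k-1) with hB
  have hA0 : 0 < A := by
    have h1 : (0:ℝ) < (p₀:ℝ)^Mn := by positivity
    have h2 : (0:ℝ) < (2 * Real.log G)^(k-1) := by positivity
    positivity
  have hAB : A ≤ B := by
    have h1 : A ≤ 1 := by
      have h2 : (1:ℝ) ≤ (p₀:ℝ)^Mn := one_le_pow₀ (by linarith)
      have h3 : (1:ℝ) ≤ (2 * Real.log G)^(k-1) := one_le_pow₀ (by linarith)
      calc A ≤ 1 * 1 := by
            apply mul_le_mul
            · exact inv_le_one_of_one_le₀ h2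
            · exact inv_le_one_of_one_le₀ h3
            · positivity
            · norm_num
        _ = 1 := by norm_num
    have h2 : (1:ℝ) ≤ B := by
      rw [hB]
      have h3 : (1:ℝ) ≤ 2^(P.card+1) := one_le_pow₀ (by norm_num)
      have h4 : (1:ℝ) ≤ 4^(k-1) := one_le_pow₀ (by norm_num)
      nlinarith
    linarith
  refine ⟨A, B, 3, hA0, hAB, ?_⟩
  intro x hx3
  have hx1 : (1:ℝ) < x := by linarith
  have hx0 : (0:ℝ) < x := by linarith
  have hlx : 1 ≤ Real.log x := by
    rw [Real.le_log_iff_exp_le hx0]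
    calc Real.exp 1 ≤ 2.7182818286 := Real.exp_one_lt_d9.le
      _ ≤ 3 := by norm_num
      _ ≤ x := by linarith
  have hlx0 : (0:ℝ) < Real.log x := by linarith
  have hxM : x ^ M = x ^ Mn := by rw [← hMM, zpow_natCast]
  set N : ℕ := ⌊Real.logb 2 x⌋₊ + 1 with hN
  have hxN : x < 2 ^ N := by
    have h1 : Real.logb 2 x < (N:ℝ) := by
      have h2 := Nat.lt_floor_add_one (Real.logb 2 x)
      rw [hN]
      push_cast
      linarith
    calc x = (2:ℝ) ^ Real.logb 2 x := (Real.rpow_logb (by norm_num) (by norm_num) hx0).symm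
      _ < (2:ℝ) ^ ((N:ℕ):ℝ) := Real.rpow_lt_rpow_of_exponent_lt (by norm_num) h1
      _ = 2 ^ N := by rw [Real.rpow_natCast]
  rw [S15_eq_sum P hP m x N hxN, hxM]
  set F := Fintype.piFinset (fun _ : {p // p ∈ P} => Finset.range (N + 1)) with hF
  set f : ({p // p ∈ P} → ℕ) → ℝ := fun e =>
    if (∏ p : {p // p ∈ P}, ((p : ℕ) : ℝ) ^ (e p : ℕ)) ≤ x then
      ∏ p : {p // p ∈ P}, ((p : ℕ) : ℝ) ^ (m p * (e p : ℤ))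
    else 0 with hf
  have hprime2 : ∀ a : {p // p ∈ P}, (2:ℝ) ≤ ((a:ℕ):ℝ) := by
    intro a
    exact_mod_cast (hP a.1 a.2).two_le
  have hterm : ∀ e : {p // p ∈ P} → ℕ,
      (∏ p : {p // p ∈ P}, ((p:ℕ):ℝ) ^ (m p.1 * (e p : ℤ)))
        = (∏ p : {p // p ∈ P}, ((p:ℕ):ℝ) ^ (e p)) ^ Mn
          * ∏ p : {p // p ∈ P}, ((p:ℕ):ℝ) ^ ((m p.1 - M) * (e p : ℤ)) := by
    intro e
    rw [← Finset.prod_pow, ← Finset.prod_mul_distrib]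
    refine Finset.prod_congr rfl fun a _ => ?_
    have ha0 : ((a:ℕ):ℝ) ≠ 0 := by
      have := hprime2 a
      linarith
    rw [← pow_mul, ← zpow_natCast ((a:ℕ):ℝ) (e a * Mn), ← zpow_add₀ ha0]
    congr 1
    push_cast
    rw [hMM]
    ring
  have hnonneg : ∀ e : {p // p ∈ P} → ℕ, (0:ℝ) ≤ f e := by
    intro e
    rw [hf]
    dsimp only
    split_ifs
    · exact Finset.prod_nonneg fun a _ => zpow_nonneg (by linarith [hprime2 a]) _
    · exact le_refl 0
  constructor
  · -- LOWER BOUND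
    set L := ⌊Real.log x / (2 * Real.log (G:ℝ))⌋₊ with hLdef
    have hy0 : (0:ℝ) ≤ Real.log x / (2 * Real.log (G:ℝ)) := by positivity
    have hfl : (L:ℝ) ≤ Real.log x / (2 * Real.log (G:ℝ)) := Nat.floor_le hy0
    have hGL : ((G:ℕ):ℝ)^L ≤ x := by
      have h1 : Real.log (((G:ℕ):ℝ)^L) ≤ Real.log x := by
        rw [Real.log_pow]
        calc (L:ℝ) * Real.log (G:ℝ)
            ≤ (Real.log x / (2 * Real.log (G:ℝ))) * Real.log (G:ℝ) :=
              mul_le_mul_of_nonneg_right hfl hlogG0.le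
          _ = Real.log x / 2 := by field_simp
          _ ≤ Real.log x := by linarith
      have hGp : (0:ℝ) < ((G:ℕ):ℝ)^L := by positivity
      exact (Real.log_le_log_iff hGp hx0).mp h1
    have hLN : L < N := by
      have h2L : (2:ℝ)^L ≤ x := le_trans (pow_le_pow_left₀ (by norm_num) hGR L) hGL
      have h3 : (2:ℝ)^L < (2:ℝ)^N := lt_of_le_of_lt h2L hxN
      exact (pow_lt_pow_iff_right₀ (a := (2:ℝ)) (by norm_num)).mp h3
    set D := Fintype.piFinset (fun a : {p // p ∈ P} =>
      if m a.1 = M ∧ a ≠ a₀ then Finset.range (L+1) else ({0} : Finset ℕ)) with hD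
    have hD0 : ∀ e' ∈ D, e' a₀ = 0 := by
      intro e' he'
      rw [hD, Fintype.mem_piFinset] at he'
      have h := he' a₀
      simp at h
      exact h
    have hDle : ∀ e' ∈ D, ∀ a, e' a ≤ L := by
      intro e' he' a
      rw [hD, Fintype.mem_piFinset] at he'
      have h := he' a
      split_ifs at h
      · exact Nat.lt_succ_iff.mp (Finset.mem_range.mp h)
      · simp at h
        omega
    have hDQ : ∀ e' ∈ D, ∀ a, ¬(m a.1 = M ∧ a ≠ a₀) → e' a = 0 := by
      intro e' he' a hcond
      rw [hD, Fintype.mem_piFinset] at he'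
      have h := he' a
      rw [if_neg hcond] at h
      simpa using h
    have hnp1 : ∀ e : {p // p ∈ P} → ℕ,
        (1:ℝ) ≤ ∏ p : {p // p ∈ P}, ((p:ℕ):ℝ)^(e p) := by
      intro e
      exact one_le_prodR fun a _ => one_le_pow₀ (by linarith [hprime2 a])
    have hnpD : ∀ e' ∈ D, (∏ p : {p // p ∈ P}, ((p:ℕ):ℝ)^(e' p)) ≤ x := by
      intro e' he'
      calc (∏ p : {p // p ∈ P}, ((p:ℕ):ℝ)^(e' p))
          ≤ ∏ p : {p // p ∈ P}, ((p:ℕ):ℝ)^L := by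
            refine Finset.prod_le_prod (fun a _ => by positivity) (fun a _ => ?_)
            exact pow_le_pow_right₀ (by linarith [hprime2 a]) (hDle e' he' a)
        _ = (∏ p : {p // p ∈ P}, ((p:ℕ):ℝ))^L := by rw [Finset.prod_pow]
        _ = ((G:ℕ):ℝ)^L := by
            congr 1
            rw [hG]
            push_cast
            exact Finset.prod_coe_sort P (fun p => (p:ℝ))
        _ ≤ x := hGL
    set cf : ({p // p ∈ P} → ℕ) → ℕ := fun e' =>
      Nat.findGreatest (fun c => (p₀:ℝ)^c * (∏ p : {p // p ∈ P}, ((p:ℕ):ℝ)^(e' p)) ≤ x) N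
      with hcf
    set φ : ({p // p ∈ P} → ℕ) → ({p // p ∈ P} → ℕ) :=
      fun e' => Function.update e' a₀ (cf e') with hφ
    have hkey : ∀ e' ∈ D,
        ((p₀:ℝ)^(cf e') * (∏ p : {p // p ∈ P}, ((p:ℕ):ℝ)^(e' p)) ≤ x)
        ∧ x < (p₀:ℝ)^(cf e' + 1) * (∏ p : {p // p ∈ P}, ((p:ℕ):ℝ)^(e' p))
        ∧ cf e' < N := by
      intro e' he'
      have hc1 : (p₀:ℝ)^(cf e') * (∏ p : {p // p ∈ P}, ((p:ℕ):ℝ)^(e' p)) ≤ x := by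
        have h8 := Nat.findGreatest_spec
          (P := fun c => (p₀:ℝ)^c * (∏ p : {p // p ∈ P}, ((p:ℕ):ℝ)^(e' p)) ≤ x)
          (Nat.zero_le N) (by simpa using hnpD e' he')
        exact h8
      have hcN : cf e' < N := by
        have h1 : (p₀:ℝ)^(cf e') ≤ x := by
          calc (p₀:ℝ)^(cf e') = (p₀:ℝ)^(cf e') * 1 := (mul_one _).symm
            _ ≤ (p₀:ℝ)^(cf e') * (∏ p : {p // p ∈ P}, ((p:ℕ):ℝ)^(e' p)) := by
                apply mul_le_mul_of_nonneg_left (hnp1 e') (by positivity)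
            _ ≤ x := hc1
        have h2 : (p₀:ℝ)^(cf e') < (p₀:ℝ)^N := by
          calc (p₀:ℝ)^(cf e') ≤ x := h1
            _ < 2^N := hxN
            _ ≤ (p₀:ℝ)^N := pow_le_pow_left₀ (by norm_num) hp₀R N
        exact (pow_lt_pow_iff_right₀ (by linarith)).mp h2
      refine ⟨hc1, ?_, hcN⟩
      have h4 := Nat.findGreatest_is_greatest
        (P := fun c => (p₀:ℝ)^c * (∏ p : {p // p ∈ P}, ((p:ℕ):ℝ)^(e' p)) ≤ x)
        (n := N) (Nat.lt_succ_self _) hcN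
      exact not_le.mp h4
    have hφF : ∀ e' ∈ D, φ e' ∈ F := by
      intro e' he'
      rw [hF, Fintype.mem_piFinset]
      intro a
      rw [Finset.mem_range]
      by_cases h : a = a₀
      · rw [h]
        have h9 : φ e' a₀ = cf e' := Function.update_self _ _ _
        rw [h9]
        exact Nat.lt_succ_of_lt (hkey e' he').2.2
      · have : φ e' a = e' a := Function.update_of_ne h _ _
        rw [this]
        exact lt_of_le_of_lt (hDle e' he' a) (Nat.lt_succ_of_lt hLN)
    have hnpφ : ∀ e' ∈ D,
        (∏ p : {p // p ∈ P}, ((p:ℕ):ℝ)^(φ e' p))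
          = (p₀:ℝ)^(cf e') * (∏ p : {p // p ∈ P}, ((p:ℕ):ℝ)^(e' p)) := by
      intro e' he'
      exact prod_update_of_eq_one a₀ (fun a t => ((a:ℕ):ℝ)^t) e' (cf e')
        (hD0 e' he') (pow_zero _)
    have hval : ∀ e' ∈ D, f (φ e') = (∏ p : {p // p ∈ P}, ((p:ℕ):ℝ)^(φ e' p))^Mn := by
      intro e' he'
      rw [hf]
      dsimp only
      rw [if_pos (by rw [hnpφ e' he']; exact (hkey e' he').1), hterm (φ e')]
      have hV1 : (∏ p : {p // p ∈ P}, ((p:ℕ):ℝ)^((m p.1 - M) * (φ e' p : ℤ))) = 1 := by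
        apply Finset.prod_eq_one
        intro a _
        by_cases h : a = a₀
        · rw [h]
          have h0 : m (a₀ : ℕ) - M = 0 := by
            show m p₀ - M = 0
            rw [hp₀M, sub_self]
          rw [h0, zero_mul, zpow_zero]
        · have hupd : φ e' a = e' a := Function.update_of_ne h _ _
          rw [hupd]
          by_cases hm : m a.1 = M
          · rw [hm, sub_self, zero_mul, zpow_zero]
          · have h5 : e' a = 0 := hDQ e' he' a (fun hc => hm hc.1)
            rw [h5]
            norm_num
      rw [hV1, mul_one]
    have hinj : Set.InjOn φ ↑D := by
      intro e₁ h₁ e₂ h₂ heq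
      have h₁' : e₁ ∈ D := h₁
      have h₂' : e₂ ∈ D := h₂
      funext a
      by_cases h : a = a₀
      · subst h
        rw [hD0 e₁ h₁', hD0 e₂ h₂']
      · have h6 := congrFun heq a
        rwa [show φ e₁ a = e₁ a from Function.update_of_ne h _ _,
             show φ e₂ a = e₂ a from Function.update_of_ne h _ _] at h6
    have hsub : D.image φ ⊆ F := by
      intro e he
      obtain ⟨e', he', rfl⟩ := Finset.mem_image.mp he
      exact hφF e' he'
    have hcard : (D.image φ).card = (L+1)^(k-1) := by
      rw [Finset.card_image_of_injOn hinj, hD, Fintype.card_piFinset]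
      have h1 : ∀ a : {p // p ∈ P},
          (if m a.1 = M ∧ a ≠ a₀ then Finset.range (L+1) else ({0}:Finset ℕ)).card
            = if m a.1 = M ∧ a ≠ a₀ then L+1 else 1 := by
        intro a
        split_ifs <;> simp
      rw [Finset.prod_congr rfl (fun a _ => h1 a), Finset.prod_ite,
          Finset.prod_const, Finset.prod_const, one_pow, mul_one]
      congr 1
      rw [hk, ha₀]
      exact card_filter_pair P m M p₀ hp₀P hp₀M
    have h2 : ∀ e ∈ D.image φ, ((x / (p₀:ℝ))^Mn : ℝ) ≤ f e := by
      intro e he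
      obtain ⟨e', he', rfl⟩ := Finset.mem_image.mp he
      rw [hval e' he']
      apply pow_le_pow_left₀ (by positivity)
      rw [hnpφ e' he']
      have hgt := (hkey e' he').2.1
      rw [div_le_iff₀ (by linarith : (0:ℝ) < (p₀:ℝ))]
      calc x ≤ (p₀:ℝ)^(cf e' + 1) * (∏ p : {p // p ∈ P}, ((p:ℕ):ℝ)^(e' p)) := hgt.le
        _ = ((p₀:ℝ)^(cf e') * (∏ p : {p // p ∈ P}, ((p:ℕ):ℝ)^(e' p))) * (p₀:ℝ) := by ring
    calc A * x^Mn * Real.log x^(k-1)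
        ≤ ((L:ℝ)+1)^(k-1) * (x/(p₀:ℝ))^Mn := by
          have hL1 : Real.log x / (2*Real.log (G:ℝ)) ≤ (L:ℝ)+1 := (Nat.lt_floor_add_one _).le
          have hp1 : (Real.log x / (2*Real.log (G:ℝ)))^(k-1) ≤ ((L:ℝ)+1)^(k-1) :=
            pow_le_pow_left₀ hy0 hL1 _
          have heq : A * x^Mn * Real.log x^(k-1)
              = (Real.log x/(2*Real.log (G:ℝ)))^(k-1) * (x^Mn * ((p₀:ℝ)^Mn)⁻¹) := by
            rw [hA, div_pow]
            ring
          have heq2 : ((L:ℝ)+1)^(k-1) * (x/(p₀:ℝ))^Mn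
              = ((L:ℝ)+1)^(k-1) * (x^Mn * ((p₀:ℝ)^Mn)⁻¹) := by
            rw [div_pow]
            ring
          rw [heq, heq2]
          exact mul_le_mul_of_nonneg_right hp1 (by positivity)
      _ = (((L+1)^(k-1) : ℕ) : ℝ) * (x/(p₀:ℝ))^Mn := by push_cast; ring
      _ ≤ ∑ e ∈ D.image φ, f e := by
          rw [← hcard]
          have h7 := Finset.card_nsmul_le_sum (D.image φ) f _ h2
          simpa [nsmul_eq_mul] using h7
      _ ≤ ∑ e ∈ F, f e :=
          Finset.sum_le_sum_of_subset_of_nonneg hsub (fun e _ _ => hnonneg e)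
  · -- UPPER BOUND
    have step1 : ∀ e : {p // p ∈ P} → ℕ, f e = (if (∏ p : {p // p ∈ P}, ((p:ℕ):ℝ)^(e p)) ≤ x
        then (∏ p : {p // p ∈ P}, ((p:ℕ):ℝ)^(e p))^Mn
          * (∏ p : {p // p ∈ P}, ((p:ℕ):ℝ)^((m p.1 - M) * (e p : ℤ))) else 0) := by
      intro e
      rw [hf]
      dsimp only
      exact if_congr Iff.rfl (hterm e) rfl
    set g : ({p // p ∈ P} → ℕ) → ℝ := fun e => (if (∏ p : {p // p ∈ P}, ((p:ℕ):ℝ)^(e p)) ≤ x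
        then (∏ p : {p // p ∈ P}, ((p:ℕ):ℝ)^(e p))^Mn
          * (∏ p : {p // p ∈ P}, ((p:ℕ):ℝ)^((m p.1 - M) * (e p : ℤ))) else 0) with hg
    set n' : ({a : {p // p ∈ P} // a ≠ a₀} → ℕ) → ℝ :=
      fun e' => ∏ a : {a : {p // p ∈ P} // a ≠ a₀}, ((a.1:ℕ):ℝ)^(e' a) with hn'
    set V' : ({a : {p // p ∈ P} // a ≠ a₀} → ℕ) → ℝ :=
      fun e' => ∏ a : {a : {p // p ∈ P} // a ≠ a₀}, ((a.1:ℕ):ℝ)^((m a.1.1 - M) * (e' a : ℤ))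
      with hV'
    have hn'pos : ∀ e', 0 < n' e' := by
      intro e'
      rw [hn']
      exact Finset.prod_pos fun a _ => pow_pos (by linarith [hprime2 a.1]) _
    have hV'nonneg : ∀ e', 0 ≤ V' e' := by
      intro e'
      rw [hV']
      exact Finset.prod_nonneg fun a _ => zpow_nonneg (by linarith [hprime2 a.1]) _
    have hcomb : ∀ (c : ℕ) (e' : {a : {p // p ∈ P} // a ≠ a₀} → ℕ),
        g (fun a => if h : a = a₀ then c else e' ⟨a, h⟩)
          = (if (p₀:ℝ)^c * n' e' ≤ x then ((p₀:ℝ)^c * n' e')^Mn * V' e' else 0) := by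
      intro c e'
      have h1 : (∏ p : {p // p ∈ P}, ((p:ℕ):ℝ) ^ (if h : p = a₀ then c else e' ⟨p,h⟩))
          = (p₀:ℝ)^c * n' e' := prod_split a₀ (fun a t => ((a:ℕ):ℝ)^t) c e'
      have h2 : (∏ p : {p // p ∈ P},
            ((p:ℕ):ℝ) ^ ((m p.1 - M) * ((if h : p = a₀ then c else e' ⟨p,h⟩ : ℕ) : ℤ)))
          = V' e' := by
        have h3 := prod_split a₀ (fun a t => ((a:ℕ):ℝ)^((m a.1 - M) * (t:ℤ))) c e'
        calc (∏ p : {p // p ∈ P},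
              ((p:ℕ):ℝ) ^ ((m p.1 - M) * ((if h : p = a₀ then c else e' ⟨p,h⟩ : ℕ) : ℤ)))
            = ((a₀:ℕ):ℝ)^((m a₀.1 - M) * (c:ℤ)) * V' e' := h3
          _ = V' e' := by
              have h4 : ((a₀:ℕ):ℝ)^((m a₀.1 - M) * (c:ℤ)) = 1 := by
                show ((p₀:ℕ):ℝ)^((m p₀ - M) * (c:ℤ)) = 1
                rw [hp₀M, sub_self, zero_mul, zpow_zero]
              rw [h4, one_mul]
      show (if (∏ p : {p // p ∈ P}, ((p:ℕ):ℝ)^(if h : p = a₀ then c else e' ⟨p,h⟩)) ≤ x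
        then (∏ p : {p // p ∈ P}, ((p:ℕ):ℝ)^(if h : p = a₀ then c else e' ⟨p,h⟩))^Mn
          * (∏ p : {p // p ∈ P},
              ((p:ℕ):ℝ)^((m p.1 - M) * ((if h : p = a₀ then c else e' ⟨p,h⟩ : ℕ) : ℤ))) else 0)
        = (if (p₀:ℝ)^c * n' e' ≤ x then ((p₀:ℝ)^c * n' e')^Mn * V' e' else 0)
      rw [h1, h2]
    have hVsum : (∑ e' ∈ Fintype.piFinset
          (fun _ : {a : {p // p ∈ P} // a ≠ a₀} => Finset.range (N+1)), V' e')
        ≤ ((N:ℝ)+1)^(k-1) * 2^(P.card) := by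
      have e1 : (∑ e' ∈ Fintype.piFinset
            (fun _ : {a : {p // p ∈ P} // a ≠ a₀} => Finset.range (N+1)), V' e')
          = ∏ a : {a : {p // p ∈ P} // a ≠ a₀},
              ∑ t ∈ Finset.range (N+1), ((a.1:ℕ):ℝ)^((m a.1.1 - M) * (t:ℤ)) := by
        rw [Finset.prod_univ_sum]
        try exact Finset.sum_congr rfl fun e' _ => by simp only [hV']
      rw [e1]
      have hbound : ∀ a : {a : {p // p ∈ P} // a ≠ a₀},
          (∑ t ∈ Finset.range (N+1), ((a.1:ℕ):ℝ)^((m a.1.1 - M) * (t:ℤ)))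
            ≤ (if m a.1.1 = M then ((N:ℝ)+1) else 2) := by
        intro a
        by_cases hma : m a.1.1 = M
        · rw [if_pos hma]
          have h5 : ∀ t ∈ Finset.range (N+1), ((a.1:ℕ):ℝ)^((m a.1.1 - M) * (t:ℤ)) = 1 := by
            intro t _
            rw [hma, sub_self, zero_mul, zpow_zero]
          rw [Finset.sum_congr rfl h5, Finset.sum_const, Finset.card_range]
          simp
        · rw [if_neg hma]
          have h2a := hprime2 a.1
          have hexp : m a.1.1 - M ≤ -1 := by
            have := hub a.1.1 a.1.2
            omega
          have heq : ∀ t ∈ Finset.range (N+1), ((a.1:ℕ):ℝ)^((m a.1.1 - M) * (t:ℤ))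
              = (((a.1:ℕ):ℝ)^(m a.1.1 - M))^t := by
            intro t _
            rw [zpow_mul, zpow_natCast]
          rw [Finset.sum_congr rfl heq]
          apply sum_geom_le_two (zpow_nonneg (by linarith) _)
          calc ((a.1:ℕ):ℝ)^(m a.1.1 - M) ≤ ((a.1:ℕ):ℝ)^(-1:ℤ) :=
                zpow_le_zpow_right₀ (by linarith) hexp
            _ = (((a.1:ℕ):ℝ))⁻¹ := zpow_neg_one _
            _ ≤ 1/2 := by
                rw [one_div]
                exact inv_anti₀ (by norm_num) h2a
      have hc1 : (Finset.univ.filter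
            (fun a : {a : {p // p ∈ P} // a ≠ a₀} => m a.1.1 = M)).card = k - 1 := by
        rw [card_filter_sub P m M a₀, hk, ha₀]
        exact card_filter_pair P m M p₀ hp₀P hp₀M
      have hcle : (Finset.univ.filter
            (fun a : {a : {p // p ∈ P} // a ≠ a₀} => ¬ m a.1.1 = M)).card ≤ P.card := by
        calc (Finset.univ.filter
              (fun a : {a : {p // p ∈ P} // a ≠ a₀} => ¬ m a.1.1 = M)).card
            ≤ Fintype.card {a : {p // p ∈ P} // a ≠ a₀} := by
              rw [← Finset.card_univ]
              exact Finset.card_filter_le _ _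
          _ ≤ Fintype.card {p // p ∈ P} := Fintype.card_subtype_le _
          _ = P.card := Fintype.card_coe P
      calc (∏ a : {a : {p // p ∈ P} // a ≠ a₀},
            ∑ t ∈ Finset.range (N+1), ((a.1:ℕ):ℝ)^((m a.1.1 - M) * (t:ℤ)))
          ≤ ∏ a : {a : {p // p ∈ P} // a ≠ a₀}, (if m a.1.1 = M then ((N:ℝ)+1) else 2) := by
            refine Finset.prod_le_prod (fun a _ => ?_) (fun a _ => hbound a)
            exact Finset.sum_nonneg fun t _ => zpow_nonneg (by linarith [hprime2 a.1]) _
        _ = ((N:ℝ)+1)^((Finset.univ.filter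
              (fun a : {a : {p // p ∈ P} // a ≠ a₀} => m a.1.1 = M)).card)
            * 2^((Finset.univ.filter
              (fun a : {a : {p // p ∈ P} // a ≠ a₀} => ¬ m a.1.1 = M)).card) := by
            rw [Finset.prod_ite, Finset.prod_const, Finset.prod_const]
        _ ≤ ((N:ℝ)+1)^(k-1) * 2^(P.card) := by
            rw [hc1]
            apply mul_le_mul_of_nonneg_left (pow_le_pow_right₀ (by norm_num) hcle)
            positivity
    have hN4 : ((N:ℝ)+1) ≤ 4 * Real.log x := by
      have h1 : ((⌊Real.logb 2 x⌋₊ : ℕ) : ℝ) ≤ Real.logb 2 x :=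
        Nat.floor_le (Real.logb_nonneg (by norm_num) hx1.le)
      have h2 : Real.logb 2 x ≤ 2 * Real.log x := by
        rw [Real.logb, div_le_iff₀ (by linarith : (0:ℝ) < Real.log 2)]
        nlinarith
      have h3 : ((N:ℕ):ℝ) = ((⌊Real.logb 2 x⌋₊ : ℕ) : ℝ) + 1 := by
        rw [hN]
        push_cast
        ring
      linarith
    calc ∑ e ∈ F, f e
        = ∑ e ∈ F, g e := Finset.sum_congr rfl fun e _ => step1 e
      _ = ∑ c ∈ Finset.range (N+1), ∑ e' ∈ Fintype.piFinset
            (fun _ : {a : {p // p ∈ P} // a ≠ a₀} => Finset.range (N+1)),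
            g (fun a => if h : a = a₀ then c else e' ⟨a, h⟩) := by
          rw [hF]
          exact sum_piFinset_split a₀ (N+1) g
      _ = ∑ e' ∈ Fintype.piFinset
            (fun _ : {a : {p // p ∈ P} // a ≠ a₀} => Finset.range (N+1)),
            ∑ c ∈ Finset.range (N+1), g (fun a => if h : a = a₀ then c else e' ⟨a, h⟩) :=
          Finset.sum_comm
      _ ≤ ∑ e' ∈ Fintype.piFinset
            (fun _ : {a : {p // p ∈ P} // a ≠ a₀} => Finset.range (N+1)),
            2 * x^Mn * V' e' := by
          refine Finset.sum_le_sum fun e' _ => ?_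
          rw [Finset.sum_congr rfl (fun c _ => hcomb c e')]
          exact inner_sum_le p₀ hp₀2 Mn hMn1 x (n' e') (V' e') (hn'pos e') (hV'nonneg e') hx0 N
      _ = 2 * x^Mn * ∑ e' ∈ Fintype.piFinset
            (fun _ : {a : {p // p ∈ P} // a ≠ a₀} => Finset.range (N+1)), V' e' := by
          rw [Finset.mul_sum]
      _ ≤ 2 * x^Mn * (((N:ℝ)+1)^(k-1) * 2^(P.card)) := by
          apply mul_le_mul_of_nonneg_left hVsum (by positivity)
      _ ≤ B * x^Mn * Real.log x^(k-1) := by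
          have h5 : (((N:ℝ)+1))^(k-1) ≤ (4*Real.log x)^(k-1) :=
            pow_le_pow_left₀ (by positivity) hN4 _
          calc 2 * x^Mn * (((N:ℝ)+1)^(k-1) * 2^(P.card))
              ≤ 2 * x^Mn * ((4*Real.log x)^(k-1) * 2^(P.card)) := by
                apply mul_le_mul_of_nonneg_left _ (by positivity)
                apply mul_le_mul_of_nonneg_right h5 (by positivity)
            _ = B * x^Mn * Real.log x^(k-1) := by
                rw [hB, mul_pow]
                ring
end
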